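/- Let A be a commutative multiplicative hyperring with identity and let Q be a (u,v)-absorbing prime strong 𝒞-hyperideal of A, where u,v ∈ ℕ and u > v. Then (i) rad(Q) is a prime hyperideal of A; and (ii) if Q is not a prime hyperideal of A, then A is local, and if moreover u = v+1, then rad(Q) = M where M is the unique maximal hyperideal of A. -/

import Mathlib

/-- A commutative multiplicative hyperring with identity: `(A,+)` is a commutative group,
`∘ = hmul` is a commutative associative hyperoperation with nonempty values, satisfying
`x∘(y+z) ⊆ x∘y + x∘z`, `x∘(−y) = (−x)∘y = −(x∘y)`, and `a ∈ a∘1` for all `a`. -/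
class CommHyperring (A : Type*) [AddCommGroup A] [One A] where
  hmul : A → A → Set A
  hmul_nonempty : ∀ x y : A, (hmul x y).Nonempty
  hmul_comm : ∀ x y : A, hmul x y = hmul y x
  hmul_assoc : ∀ x y z : A, (⋃ a ∈ hmul y z, hmul x a) = ⋃ b ∈ hmul x y, hmul b z
  hmul_add : ∀ x y z : A, hmul x (y + z) ⊆ Set.image2 (· + ·) (hmul x y) (hmul x z)
  hmul_neg : ∀ x y : A, hmul x (-y) = Neg.neg '' hmul x y
  neg_hmul : ∀ x y : A, hmul (-x) y = Neg.neg '' hmul x y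
  one_mem : ∀ a : A, a ∈ hmul a 1

open CommHyperring

variable {A : Type*} [AddCommGroup A] [One A] [CommHyperring A]

/-- The hyperoperation extended to subsets: `X∘Y = ⋃_{x∈X, y∈Y} x∘y`. -/
def sMul (X Y : Set A) : Set A := ⋃ x ∈ X, ⋃ y ∈ Y, hmul x y

/-- The product `x₁∘⋯∘xₙ` of the members of a list. -/
def hProd : List A → Set A
  | [] => {1}
  | [a] => {a}
  | a :: l => ⋃ c ∈ hProd l, hmul a c

/-- `xⁿ = x∘⋯∘x` (`n` factors). -/
def hPow (a : A) (n : ℕ) : Set A := hProd (List.replicate n a)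

/-- `a` is a unit if `1 ∈ a∘b` for some `b`. -/
def IsUnitH (a : A) : Prop := ∃ b : A, (1 : A) ∈ hmul a b

/-- A hyperideal of `A`. -/
def IsHyperideal (B : Set A) : Prop :=
  B.Nonempty ∧ (∀ x ∈ B, ∀ y ∈ B, x - y ∈ B) ∧ ∀ r : A, ∀ x ∈ B, hmul r x ⊆ B

def IsProperHyperideal (B : Set A) : Prop := IsHyperideal B ∧ B ≠ Set.univ

/-- A prime hyperideal. -/
def IsPrimeHyperideal (B : Set A) : Prop :=
  IsProperHyperideal B ∧ ∀ x y : A, hmul x y ⊆ B → x ∈ B ∨ y ∈ B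

/-- The prime radical: the intersection of all prime hyperideals containing `B`
(`= A` if there are none). -/
def radH (B : Set A) : Set A := ⋂₀ {P : Set A | IsPrimeHyperideal P ∧ B ⊆ P}

/-- A `𝒞`-hyperideal: meets a finite product `⇒` contains it. -/
def IsCHyperideal (B : Set A) : Prop :=
  IsHyperideal B ∧ ∀ l : List A, l ≠ [] → (hProd l ∩ B).Nonempty → hProd l ⊆ B

def setAdd (X Y : Set A) : Set A := Set.image2 (· + ·) X Y

/-- The sum `C₁ + ⋯ + Cₙ` of the finite products coded by a list of lists. -/
def sumProds (L : List (List A)) : Set A := L.foldr (fun l S => setAdd (hProd l) S) {0}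

/-- A strong `𝒞`-hyperideal: meets a finite sum of finite products `⇒` contains it. -/
def IsStrongCHyperideal (B : Set A) : Prop :=
  IsHyperideal B ∧ ∀ L : List (List A), L ≠ [] → (∀ l ∈ L, l ≠ []) →
    (sumProds L ∩ B).Nonempty → sumProds L ⊆ B

/-- A `v`-absorbing hyperideal. -/
def IsNAbsorbing (Q : Set A) (v : ℕ) : Prop :=
  IsProperHyperideal Q ∧ ∀ l : List A, l.length = v + 1 → hProd l ⊆ Q →
    ∃ l', l'.Sublist l ∧ l'.length = v ∧ hProd l' ⊆ Q

/-- A `(u,v)`-absorbing hyperideal. -/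
def IsUVAbsorbing (Q : Set A) (u v : ℕ) : Prop :=
  IsProperHyperideal Q ∧ ∀ l : List A, l.length = u → (∀ x ∈ l, ¬IsUnitH x) → hProd l ⊆ Q →
    ∃ l', l'.Sublist l ∧ l'.length = v ∧ hProd l' ⊆ Q

/-- An `AB`-`(u,v)`-absorbing hyperideal. -/
def IsABUVAbsorbing (Q : Set A) (u v : ℕ) : Prop :=
  IsProperHyperideal Q ∧ ∀ l : List A, l.length = u → hProd l ⊆ Q →
    ∃ l', l'.Sublist l ∧ l'.length = v ∧ hProd l' ⊆ Q

/-- A `(u,v)`-absorbing prime hyperideal. -/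
def IsUVAbsorbingPrime (Q : Set A) (u v : ℕ) : Prop :=
  IsProperHyperideal Q ∧ ∀ l : List A, l.length = u → (∀ x ∈ l, ¬IsUnitH x) → hProd l ⊆ Q →
    hProd (l.take v) ⊆ Q ∨ hProd (l.drop v) ⊆ Q

/-- A maximal hyperideal. -/
def IsMaximalHyperideal (M : Set A) : Prop :=
  IsProperHyperideal M ∧ ∀ B : Set A, IsHyperideal B → M ⊂ B → B = Set.univ

/-- `A` is local if it has exactly one maximal hyperideal. -/
def IsLocalH (A : Type*) [AddCommGroup A] [One A] [CommHyperring A] : Prop :=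
  ∃! M : Set A, IsMaximalHyperideal M

/-- `P` is a prime hyperideal minimal over `Q`. -/
def MinimalPrimeOver (Q P : Set A) : Prop :=
  IsPrimeHyperideal P ∧ Q ⊆ P ∧
    ∀ P' : Set A, IsPrimeHyperideal P' → Q ⊆ P' → P' ⊆ P → P' = P

/-- `Iⁿ = ⋃ {x₁∘⋯∘xₙ : xᵢ ∈ I}`. -/
def idealPow (I : Set A) (n : ℕ) : Set A :=
  ⋃ l ∈ {l : List A | l.length = n ∧ ∀ x ∈ l, x ∈ I}, hProd l

/-- `I₁∘⋯∘Iₙ = ⋃ {x₁∘⋯∘xₙ : xᵢ ∈ Iᵢ}`. -/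
def idealProd (L : List (Set A)) : Set A :=
  ⋃ l ∈ {l : List A | List.Forall₂ (· ∈ ·) l L}, hProd l

/-- `Abs(Q)`: the minimal `v` such that `Q` is `v`-absorbing. -/
noncomputable def AbsN (Q : Set A) : ℕ := sInf {v : ℕ | IsNAbsorbing Q v}

/-- `abs(Q)`: the minimal `v` such that `Q` is `(Abs(Q)+1, v)`-absorbing. -/
noncomputable def absN (Q : Set A) : ℕ := sInf {v : ℕ | IsUVAbsorbing Q (AbsN Q + 1) v}

/-- A primary hyperideal. -/
def IsPrimaryHyperideal (Q : Set A) : Prop :=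
  IsProperHyperideal Q ∧ ∀ x y : A, hmul x y ⊆ Q → x ∈ Q ∨ ∃ t : ℕ, 1 ≤ t ∧ hPow y t ⊆ Q

/-- `A` is a hyperfield if every nonzero element is a unit. -/
def IsHyperfield (A : Type*) [AddCommGroup A] [One A] [CommHyperring A] : Prop :=
  ∀ x : A, x ≠ 0 → IsUnitH x

/-- `(Q : x) = {a : a∘x ⊆ Q}`. -/
def colonH (Q : Set A) (x : A) : Set A := {a : A | hmul a x ⊆ Q}

/-- `J(A)`: the intersection of all maximal hyperideals of `A`. -/
def JacobsonH (A : Type*) [AddCommGroup A] [One A] [CommHyperring A] : Set A :=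
  ⋂₀ {M : Set A | IsMaximalHyperideal M}

/-!
Let `D = powRadH Q = {a | aⁿ ⊆ Q for some n ≥ 1}`. Expanding `(a+b)^(m+n)` and counting factors
makes `D` a hyperideal. If `x∘y ⊆ D` with `x, y` non-units, pick `c ∈ x∘y` with `cᴺ ⊆ Q`; since
`cᴺ ⊆ xᴺ∘yᴺ`, the `𝒞`-property puts all of `xᴺ∘yᴺ` in `Q`, and splitting off `v` factors at a
time from `x^(vN)∘yᴺ` yields `xᵛ ⊆ Q` or `yᴺ ⊆ Q`. So `D` is prime, and as it lies in every
prime containing `Q`, `rad(Q) = D`.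

If `x∘y ⊆ Q` with `x, y ∉ Q`, absorbing `x∘m∘y∘s` shows that `x∘m ⊆ Q` or `y∘s ⊆ Q` for all
words `m`, `s` of non-units of lengths `v-1` and `u-v-1`. Expanding `x∘(a+b)^(v-1)` and
`y∘(a+b)^(u-v-1)` then shows that a sum of non-units is a non-unit, so the non-units form the
unique maximal hyperideal. When `u = v+1`, absorbing `aᵛ∘x` gives `aᵛ ⊆ Q` for every non-unit
`a`, so `D` is that maximal hyperideal.
-/

theorem List.replicate_sublist_or_of_forall_mem {α : Type*} [DecidableEq α] {a b : α}
    {l : List α} (hl : ∀ z ∈ l, z = a ∨ z = b) {m n : ℕ} (hlen : m + n ≤ l.length) :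
    (List.replicate m a).Sublist l ∨ (List.replicate n b).Sublist l := by
  have hcount : l.length ≤ l.count a + l.count b := by
    clear hlen
    induction l with
    | nil => simp
    | cons z t ih =>
      have := ih fun x hx ↦ hl x (List.mem_cons_of_mem z hx)
      rcases hl z List.mem_cons_self with rfl | rfl <;> simp [List.count_cons] <;> omega
  simp only [List.replicate_sublist_iff]
  omega

section Products

theorem mem_sMul {X Y : Set A} {t : A} :
    t ∈ sMul X Y ↔ ∃ x ∈ X, ∃ y ∈ Y, t ∈ hmul x y := by
  simp [sMul]

theorem sMul_singleton_singleton (a b : A) : sMul {a} {b} = hmul a b := by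
  simp [sMul]

theorem sMul_comm (X Y : Set A) : sMul X Y = sMul Y X := by
  ext t
  simp only [mem_sMul]
  constructor <;>
  · rintro ⟨x, hx, y, hy, ht⟩
    exact ⟨y, hy, x, hx, hmul_comm x y ▸ ht⟩

theorem sMul_assoc (X Y Z : Set A) : sMul (sMul X Y) Z = sMul X (sMul Y Z) := by
  ext t
  simp only [mem_sMul]
  constructor
  · rintro ⟨b, ⟨x, hx, y, hy, hb⟩, z, hz, ht⟩
    have : t ∈ ⋃ a ∈ hmul y z, hmul x a := hmul_assoc x y z ▸ Set.mem_biUnion hb ht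
    obtain ⟨a, ha, hta⟩ := Set.mem_iUnion₂.1 this
    exact ⟨x, hx, a, ⟨y, hy, z, hz, ha⟩, hta⟩
  · rintro ⟨x, hx, a, ⟨y, hy, z, hz, ha⟩, ht⟩
    have : t ∈ ⋃ b ∈ hmul x y, hmul b z := hmul_assoc x y z ▸ Set.mem_biUnion ha ht
    obtain ⟨b, hb, htb⟩ := Set.mem_iUnion₂.1 this
    exact ⟨b, ⟨x, hx, y, hy, hb⟩, z, hz, htb⟩

theorem sMul_mono {X X' Y Y' : Set A} (hX : X ⊆ X') (hY : Y ⊆ Y') :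
    sMul X Y ⊆ sMul X' Y' := fun _ ht ↦
  let ⟨x, hx, y, hy, h⟩ := mem_sMul.1 ht
  mem_sMul.2 ⟨x, hX hx, y, hY hy, h⟩

theorem hProd_singleton (a : A) : hProd [a] = {a} := rfl

theorem hProd_cons (a : A) {l : List A} (hl : l ≠ []) :
    hProd (a :: l) = sMul {a} (hProd l) := by
  match l, hl with
  | b :: t, _ => simp [hProd, sMul]

theorem hProd_pair (a b : A) : hProd [a, b] = hmul a b := by
  rw [hProd_cons a (List.cons_ne_nil b []), hProd_singleton, sMul_singleton_singleton]

theorem hProd_append {l₁ l₂ : List A} (h₁ : l₁ ≠ []) (h₂ : l₂ ≠ []) :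
    hProd (l₁ ++ l₂) = sMul (hProd l₁) (hProd l₂) := by
  induction l₁ with
  | nil => exact absurd rfl h₁
  | cons a t ih =>
    rcases eq_or_ne t [] with rfl | ht
    · rw [List.singleton_append, hProd_cons a h₂, hProd_singleton]
    · rw [List.cons_append, hProd_cons a (by simp [ht]), ih ht, hProd_cons a ht, sMul_assoc]

theorem hProd_nonempty (l : List A) : (hProd l).Nonempty := by
  induction l with
  | nil => exact Set.singleton_nonempty 1
  | cons a t ih =>
    rcases eq_or_ne t [] with rfl | ht
    · exact Set.singleton_nonempty a
    · obtain ⟨c, hc⟩ := ih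
      obtain ⟨d, hd⟩ := hmul_nonempty a c
      exact ⟨d, by rw [hProd_cons a ht]; exact mem_sMul.2 ⟨a, rfl, c, hc, hd⟩⟩

theorem hProd_perm {l₁ l₂ : List A} (h : l₁.Perm l₂) : hProd l₁ = hProd l₂ := by
  induction h with
  | nil => rfl
  | @cons a t₁ t₂ p ih =>
    rcases eq_or_ne t₁ [] with rfl | ht₁
    · rw [p.nil_eq]
    · have ht₂ : t₂ ≠ [] := fun h ↦ ht₁ (h ▸ p).eq_nil
      rw [hProd_cons a ht₁, hProd_cons a ht₂, ih]
  | swap a b t =>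
    rcases eq_or_ne t [] with rfl | ht
    · rw [hProd_pair, hProd_pair, hmul_comm]
    · rw [hProd_cons b (by simp), hProd_cons a ht, hProd_cons a (by simp), hProd_cons b ht,
        ← sMul_assoc, ← sMul_assoc, sMul_comm {a}]
  | trans _ _ ih₁ ih₂ => rw [ih₁, ih₂]

theorem hProd_append_eq_biUnion (p : List A) {s : List A} (hs : s ≠ []) :
    hProd (p ++ s) = ⋃ c ∈ hProd s, hProd (p ++ [c]) := by
  rcases eq_or_ne p [] with rfl | hp
  · simp [hProd_singleton]
  · ext t
    simp only [hProd_append hp hs, hProd_append hp (List.cons_ne_nil _ _), hProd_singleton,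
      mem_sMul, Set.mem_iUnion, Set.mem_singleton_iff, exists_prop]
    constructor
    · rintro ⟨x, hx, c, hc, ht⟩
      exact ⟨c, hc, x, hx, c, rfl, ht⟩
    · rintro ⟨c, hc, x, hx, _, rfl, ht⟩
      exact ⟨x, hx, _, hc, ht⟩

theorem hProd_cons_add_subset (a b : A) (l : List A) :
    hProd ((a + b) :: l) ⊆ setAdd (hProd (a :: l)) (hProd (b :: l)) := by
  rcases eq_or_ne l [] with rfl | hl
  · rintro t rfl
    exact ⟨a, rfl, b, rfl, rfl⟩
  · intro t ht
    rw [hProd_cons _ hl, mem_sMul] at ht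
    obtain ⟨_, rfl, c, hc, ht⟩ := ht
    rw [hmul_comm] at ht
    obtain ⟨p, hp, q, hq, rfl⟩ := hmul_add c a b ht
    rw [hProd_cons _ hl, hProd_cons _ hl]
    exact ⟨p, mem_sMul.2 ⟨a, rfl, c, hc, hmul_comm c a ▸ hp⟩,
      q, mem_sMul.2 ⟨b, rfl, c, hc, hmul_comm c b ▸ hq⟩, rfl⟩

theorem hProd_middle_add_subset (p s : List A) (a b : A) :
    hProd (p ++ (a + b) :: s) ⊆ setAdd (hProd (p ++ a :: s)) (hProd (p ++ b :: s)) := by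
  simp only [hProd_perm List.perm_middle]
  exact hProd_cons_add_subset a b (p ++ s)

theorem hPow_one (a : A) : hPow a 1 = {a} := rfl

theorem hPow_succ (a : A) {n : ℕ} (hn : 1 ≤ n) : hPow a (n + 1) = sMul {a} (hPow a n) :=
  hProd_cons a (by simp; omega)

theorem hPow_subset_of_mem_hmul {x y c : A} (hc : c ∈ hmul x y) {n : ℕ} (hn : 1 ≤ n) :
    hPow c n ⊆ hProd (List.replicate n x ++ List.replicate n y) := by
  induction n, hn using Nat.le_induction with
  | base => simpa [hPow_one, hProd_pair] using hc
  | succ n hn ih =>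
    have hperm : (List.replicate (n + 1) x ++ List.replicate (n + 1) y).Perm
        ([x, y] ++ (List.replicate n x ++ List.replicate n y)) := by
      simp [List.replicate_succ]
    rw [hPow_succ c hn, hProd_perm hperm, hProd_append (by simp) (by simp; omega), hProd_pair]
    exact sMul_mono (Set.singleton_subset_iff.2 hc) ih

end Products

section Hyperideals

variable {Q : Set A}

theorem IsHyperideal.zero_mem (hQ : IsHyperideal Q) : (0 : A) ∈ Q := by
  obtain ⟨⟨q, hq⟩, hsub, -⟩ := hQ
  simpa using hsub q hq q hq

theorem IsHyperideal.neg_mem (hQ : IsHyperideal Q) {a : A} (ha : a ∈ Q) : -a ∈ Q := by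
  simpa using hQ.2.1 0 hQ.zero_mem a ha

theorem IsHyperideal.add_mem (hQ : IsHyperideal Q) {a b : A} (ha : a ∈ Q) (hb : b ∈ Q) :
    a + b ∈ Q := by
  simpa using hQ.2.1 a ha (-b) (hQ.neg_mem hb)

theorem IsHyperideal.setAdd_subset (hQ : IsHyperideal Q) {X Y : Set A} (hX : X ⊆ Q)
    (hY : Y ⊆ Q) : setAdd X Y ⊆ Q := by
  rintro t ⟨x, hx, y, hy, rfl⟩
  exact hQ.add_mem (hX hx) (hY hy)

theorem IsHyperideal.sMul_subset (hQ : IsHyperideal Q) {X Y : Set A} (hX : X ⊆ Q) :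
    sMul X Y ⊆ Q := fun _ ht ↦
  let ⟨x, hx, y, _, h⟩ := mem_sMul.1 ht
  hQ.2.2 y x (hX hx) (hmul_comm x y ▸ h)

theorem IsHyperideal.hProd_subset_of_subperm (hQ : IsHyperideal Q) {l' l : List A}
    (hsub : l'.Subperm l) (hne : l' ≠ []) (h : hProd l' ⊆ Q) : hProd l ⊆ Q := by
  obtain ⟨l'', hperm, hsub⟩ := hsub
  obtain ⟨t, ht⟩ := hsub.exists_perm_append
  rw [← hProd_perm hperm] at h
  rw [hProd_perm ht]
  rcases eq_or_ne t [] with rfl | ht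
  · simpa using h
  · rw [hProd_append (fun h ↦ hne (h ▸ hperm).symm.eq_nil) ht]
    exact hQ.sMul_subset h

theorem neg_mem_hmul_neg_one (b : A) : -b ∈ hmul (-1) b := by
  rw [neg_hmul, hmul_comm]
  exact Set.mem_image_of_mem _ (one_mem b)

theorem isHyperideal_of_add_mem {B : Set A} (hne : B.Nonempty)
    (hadd : ∀ a ∈ B, ∀ b ∈ B, a + b ∈ B) (hmulB : ∀ r : A, ∀ x ∈ B, hmul r x ⊆ B) :
    IsHyperideal B := by
  refine ⟨hne, fun a ha b hb ↦ ?_, hmulB⟩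
  rw [sub_eq_add_neg]
  exact hadd a ha _ (hmulB (-1) b hb (neg_mem_hmul_neg_one b))

theorem IsPrimeHyperideal.exists_mem_of_hProd_subset (hQ : IsPrimeHyperideal Q) {l : List A}
    (hl : l ≠ []) (h : hProd l ⊆ Q) : ∃ x ∈ l, x ∈ Q := by
  induction l with
  | nil => exact absurd rfl hl
  | cons a t ih =>
    rcases eq_or_ne t [] with rfl | ht
    · exact ⟨a, List.mem_singleton_self a, h rfl⟩
    by_cases ha : a ∈ Q
    · exact ⟨a, List.mem_cons_self, ha⟩
    have htQ : hProd t ⊆ Q := fun c hc ↦ by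
      refine (hQ.2 a c fun z hz ↦ h ?_).resolve_left ha
      rw [hProd_cons a ht]
      exact mem_sMul.2 ⟨a, rfl, c, hc, hz⟩
    obtain ⟨x, hx, hxQ⟩ := ih ht htQ
    exact ⟨x, List.mem_cons_of_mem a hx, hxQ⟩

theorem isUnitH_one : IsUnitH (1 : A) := ⟨1, one_mem 1⟩

theorem IsHyperideal.mem_of_isUnitH_of_hmul_subset (hQ : IsHyperideal Q) {x y : A}
    (hx : IsUnitH x) (h : hmul x y ⊆ Q) : y ∈ Q := by
  obtain ⟨b, hb⟩ := hx
  have : y ∈ ⋃ w ∈ hmul x b, hmul y w := Set.mem_biUnion hb (one_mem y)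
  rw [hmul_assoc] at this
  obtain ⟨w, hw, hyw⟩ := Set.mem_iUnion₂.1 this
  exact hQ.2.2 b w (h (hmul_comm y x ▸ hw)) (hmul_comm w b ▸ hyw)

theorem IsHyperideal.eq_univ_of_isUnitH_mem (hQ : IsHyperideal Q) {a : A} (ha : a ∈ Q)
    (hu : IsUnitH a) : Q = Set.univ :=
  Set.eq_univ_of_forall fun z ↦
    hQ.mem_of_isUnitH_of_hmul_subset hu (hmul_comm a z ▸ hQ.2.2 z a ha)

theorem IsProperHyperideal.not_isUnitH_of_mem (hQ : IsProperHyperideal Q) {a : A} (ha : a ∈ Q) :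
    ¬IsUnitH a := fun hu ↦ hQ.2 (hQ.1.eq_univ_of_isUnitH_mem ha hu)

theorem isUnitH_of_mem_hmul {x y z : A} (hz : z ∈ hmul x y) (hu : IsUnitH z) : IsUnitH x := by
  obtain ⟨d, hd⟩ := hu
  have : (1 : A) ∈ ⋃ w ∈ hmul x y, hmul w d := Set.mem_biUnion hz hd
  rw [← hmul_assoc] at this
  obtain ⟨w, -, hw⟩ := Set.mem_iUnion₂.1 this
  exact ⟨w, hw⟩

theorem isUnitH_of_mem_hProd {l : List A} {c x : A} (hc : c ∈ hProd l) (hu : IsUnitH c)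
    (hx : x ∈ l) : IsUnitH x := by
  classical
  rw [hProd_perm (List.perm_cons_erase hx)] at hc
  rcases eq_or_ne (l.erase x) [] with h | h
  · rw [h, hProd_singleton, Set.mem_singleton_iff] at hc
    exact hc ▸ hu
  · obtain ⟨_, rfl, d, -, hcd⟩ := mem_sMul.1 (hProd_cons x h ▸ hc)
    exact isUnitH_of_mem_hmul hcd hu

theorem exists_isUnitH_mem_hmul {x y : A} (hx : IsUnitH x) (hy : IsUnitH y) :
    ∃ z ∈ hmul x y, IsUnitH z := by
  obtain ⟨d, hd⟩ := hx
  obtain ⟨e, he⟩ := hy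
  have h1 : (1 : A) ∈ sMul (sMul {x} {d}) (sMul {y} {e}) := by
    rw [sMul_singleton_singleton, sMul_singleton_singleton]
    exact mem_sMul.2 ⟨1, hd, 1, he, one_mem 1⟩
  have h2 : sMul (sMul {x} {d}) (sMul {y} {e}) = sMul (sMul {x} {y}) (sMul {d} {e}) := by
    simp only [sMul_assoc, ← sMul_assoc {d}, sMul_comm {d} {y}]
  rw [h2, sMul_singleton_singleton, sMul_singleton_singleton] at h1
  obtain ⟨z, hz, w, -, h1⟩ := mem_sMul.1 h1
  exact ⟨z, hz, w, h1⟩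

theorem exists_isUnitH_mem_hProd {l : List A} (hl : ∀ x ∈ l, IsUnitH x) :
    ∃ c ∈ hProd l, IsUnitH c := by
  induction l with
  | nil => exact ⟨1, rfl, isUnitH_one⟩
  | cons a t ih =>
    rcases eq_or_ne t [] with rfl | ht
    · exact ⟨a, rfl, hl a List.mem_cons_self⟩
    obtain ⟨c, hc, hcu⟩ := ih fun x hx ↦ hl x (List.mem_cons_of_mem a hx)
    obtain ⟨z, hz, hzu⟩ := exists_isUnitH_mem_hmul (hl a List.mem_cons_self) hcu
    exact ⟨z, hProd_cons a ht ▸ mem_sMul.2 ⟨a, rfl, c, hc, hz⟩, hzu⟩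

theorem IsHyperideal.mem_of_hProd_cons_subset (hQ : IsHyperideal Q) {x : A} {l : List A}
    (h : hProd (x :: l) ⊆ Q) (hl : ∀ z ∈ l, IsUnitH z) : x ∈ Q := by
  rcases eq_or_ne l [] with rfl | hne
  · exact h rfl
  obtain ⟨c, hc, hcu⟩ := exists_isUnitH_mem_hProd hl
  refine hQ.mem_of_isUnitH_of_hmul_subset hcu fun t ht ↦ h ?_
  rw [hProd_cons x hne]
  exact mem_sMul.2 ⟨x, rfl, c, hc, hmul_comm c x ▸ ht⟩

theorem IsHyperideal.hProd_append_replicate_add_subset (hQ : IsHyperideal Q) (a b : A) (k : ℕ)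
    (p : List A)
    (h : ∀ m : List A, m.length = k → (∀ z ∈ m, z = a ∨ z = b) → hProd (p ++ m) ⊆ Q) :
    hProd (p ++ List.replicate k (a + b)) ⊆ Q := by
  induction k generalizing p with
  | zero => exact h [] rfl (by simp)
  | succ k ih =>
    have step : ∀ c, (c = a ∨ c = b) → hProd (p ++ c :: List.replicate k (a + b)) ⊆ Q :=
      fun c hc ↦ by
        simpa using ih (p ++ [c]) fun m hm hz ↦ by
          simpa using h (c :: m) (by simp [hm]) (by simpa [hc] using hz)
    rw [List.replicate_succ]
    exact (hProd_middle_add_subset p _ a b).trans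
      (hQ.setAdd_subset (step a (.inl rfl)) (step b (.inr rfl)))

end Hyperideals

theorem sumProds_singleton (l : List A) : sumProds [l] = hProd l := by
  simp [sumProds, setAdd]

theorem IsStrongCHyperideal.isCHyperideal {B : Set A} (hB : IsStrongCHyperideal B) :
    IsCHyperideal B :=
  ⟨hB.1, fun l hl hne ↦ by
    simpa [sumProds_singleton] using
      hB.2 [l] (List.cons_ne_nil _ _) (by simpa using hl) (by rwa [sumProds_singleton])⟩

def powRadH (Q : Set A) : Set A := {a | ∃ n, 1 ≤ n ∧ hPow a n ⊆ Q}

section PowRad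

variable {Q : Set A}

theorem subset_powRadH : Q ⊆ powRadH Q := fun a ha ↦
  ⟨1, le_rfl, by rw [hPow_one]; exact Set.singleton_subset_iff.2 ha⟩

theorem powRadH_subset_of_isPrimeHyperideal {P : Set A} (hP : IsPrimeHyperideal P)
    (hQP : Q ⊆ P) : powRadH Q ⊆ P := by
  rintro a ⟨n, hn, h⟩
  obtain ⟨x, hx, hxP⟩ := hP.exists_mem_of_hProd_subset (by simp; omega) (h.trans hQP)
  rwa [List.eq_of_mem_replicate hx] at hxP

theorem radH_eq_powRadH (h : IsPrimeHyperideal (powRadH Q)) : radH Q = powRadH Q :=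
  subset_antisymm (Set.sInter_subset_of_mem ⟨h, subset_powRadH⟩)
    (Set.subset_sInter fun _ ⟨hP, hQP⟩ ↦ powRadH_subset_of_isPrimeHyperideal hP hQP)

theorem IsHyperideal.hPow_subset_of_le (hQ : IsHyperideal Q) {a : A} {m n : ℕ} (hm : 1 ≤ m)
    (hmn : m ≤ n) (h : hPow a m ⊆ Q) : hPow a n ⊆ Q :=
  hQ.hProd_subset_of_subperm ((List.replicate_sublist_replicate a).2 hmn).subperm
    (by simp; omega) h

theorem IsHyperideal.isHyperideal_powRadH (hQ : IsHyperideal Q) : IsHyperideal (powRadH Q) := by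
  classical
  refine isHyperideal_of_add_mem ⟨0, subset_powRadH hQ.zero_mem⟩ ?_ ?_
  · rintro a ⟨m, hm, ha⟩ b ⟨n, hn, hb⟩
    refine ⟨m + n, by omega, hQ.hProd_append_replicate_add_subset a b _ [] fun l hl hab ↦ ?_⟩
    rcases List.replicate_sublist_or_of_forall_mem hab hl.ge with h | h
    · exact hQ.hProd_subset_of_subperm h.subperm (by simp; omega) ha
    · exact hQ.hProd_subset_of_subperm h.subperm (by simp; omega) hb
  · rintro r z ⟨n, hn, hz⟩ t ht
    refine ⟨n, hn, (hPow_subset_of_mem_hmul ht hn).trans ?_⟩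
    exact hQ.hProd_subset_of_subperm (List.sublist_append_right _ _).subperm (by simp; omega) hz

theorem IsProperHyperideal.powRadH_subset_nonunits (hQ : IsProperHyperideal Q) :
    powRadH Q ⊆ {a : A | ¬IsUnitH a} := by
  rintro a ⟨n, -, h⟩ hu
  obtain ⟨c, hc, hcu⟩ := exists_isUnitH_mem_hProd (l := List.replicate n a)
    fun x hx ↦ List.eq_of_mem_replicate hx ▸ hu
  exact hQ.not_isUnitH_of_mem (h hc) hcu

end PowRad

section Absorbing

variable {Q : Set A} {u v : ℕ}

theorem IsUVAbsorbingPrime.take_or_drop_of_le_length (habs : IsUVAbsorbingPrime Q u v)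
    (hvu : v < u) {l : List A} (hlen : u ≤ l.length) (hl : ∀ x ∈ l, ¬IsUnitH x)
    (h : hProd l ⊆ Q) : hProd (l.take v) ⊆ Q ∨ hProd (l.drop v) ⊆ Q := by
  -- absorb `p∘c` for every `c ∈ s`, where `l = p ++ s` and `|p| = u - 1 ≥ v`
  obtain ⟨p, s, rfl, hp, hs⟩ : ∃ p s, l = p ++ s ∧ p.length + 1 = u ∧ s ≠ [] :=
    ⟨l.take (u - 1), l.drop (u - 1), (List.take_append_drop _ _).symm, by simp; omega,
      by simp; omega⟩
  have hdrop : ∀ t : List A, (p ++ t).drop v = p.drop v ++ t :=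
    fun t ↦ List.drop_append_of_le_length (by omega)
  refine or_iff_not_imp_left.2 fun htake ↦ ?_
  rw [hdrop, hProd_append_eq_biUnion _ hs]
  refine Set.iUnion₂_subset fun c hc ↦ ?_
  have hcu : ¬IsUnitH c := fun hu ↦
    let ⟨x, hx⟩ := List.exists_mem_of_ne_nil s hs
    hl x (List.mem_append_right p hx) (isUnitH_of_mem_hProd hc hu hx)
  have hpc : hProd (p ++ [c]) ⊆ Q := by
    rw [hProd_append_eq_biUnion p hs] at h
    exact (Set.subset_biUnion_of_mem hc).trans h
  have hpcu : ∀ x ∈ p ++ [c], ¬IsUnitH x := by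
    simp only [List.mem_append, List.mem_singleton]
    rintro x (hx | rfl)
    exacts [hl x (List.mem_append_left s hx), hcu]
  rcases habs.2 (p ++ [c]) (by simp; omega) hpcu hpc with h' | h'
  · rw [List.take_append_of_le_length (by omega), ← List.take_append_of_le_length (l₂ := s)
      (by omega)] at h'
    exact absurd h' htake
  · rwa [hdrop] at h'

theorem IsUVAbsorbingPrime.hPow_subset_or_hProd_subset (habs : IsUVAbsorbingPrime Q u v)
    (hvu : v < u) {x : A} (hx : ¬IsUnitH x) {ys : List A} (hys : ∀ y ∈ ys, ¬IsUnitH y)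
    (hlen : u ≤ ys.length) (k : ℕ) (h : hProd (List.replicate (v * k) x ++ ys) ⊆ Q) :
    hPow x v ⊆ Q ∨ hProd ys ⊆ Q := by
  induction k with
  | zero => simpa using Or.inr h
  | succ k ih =>
    rw [Nat.mul_succ, add_comm, List.replicate_add, List.append_assoc] at h
    have hnu : ∀ z ∈ List.replicate v x ++ (List.replicate (v * k) x ++ ys), ¬IsUnitH z := by
      simp only [List.mem_append, List.mem_replicate]
      rintro z (⟨-, rfl⟩ | ⟨-, rfl⟩ | hz)
      exacts [hx, hx, hys z hz]
    rcases habs.take_or_drop_of_le_length hvu (by simp; omega) hnu h with h | h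
    · rw [List.take_left' (by simp)] at h
      exact .inl h
    · rw [List.drop_left' (by simp)] at h
      exact ih h

theorem IsUVAbsorbingPrime.isPrimeHyperideal_powRadH (habs : IsUVAbsorbingPrime Q u v)
    (hC : IsCHyperideal Q) (hv : 1 ≤ v) (hvu : v < u) : IsPrimeHyperideal (powRadH Q) := by
  have hQ := habs.1
  have hD := hQ.1.isHyperideal_powRadH
  refine ⟨⟨hD, fun h ↦ hQ.powRadH_subset_nonunits (h ▸ Set.mem_univ 1) isUnitH_one⟩,
    fun x y hxy ↦ ?_⟩
  by_cases hxu : IsUnitH x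
  · exact .inr (hD.mem_of_isUnitH_of_hmul_subset hxu hxy)
  by_cases hyu : IsUnitH y
  · exact .inl (hD.mem_of_isUnitH_of_hmul_subset hyu (hmul_comm y x ▸ hxy))
  obtain ⟨c, hc⟩ := hmul_nonempty x y
  obtain ⟨n, hn, hcn⟩ := hxy hc
  set N := max n u
  have hxyN : hProd (List.replicate N x ++ List.replicate N y) ⊆ Q := by
    obtain ⟨q, hq⟩ := hProd_nonempty (List.replicate N c)
    exact hC.2 _ (by simp; omega) ⟨q, hPow_subset_of_mem_hmul hc (by omega) hq,
      hQ.1.hPow_subset_of_le hn (le_max_left n u) hcn hq⟩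
  have hpad : hProd (List.replicate (v * N) x ++ List.replicate N y) ⊆ Q :=
    hQ.1.hProd_subset_of_subperm
      (((List.replicate_sublist_replicate x).2 (Nat.le_mul_of_pos_left N hv)).append_right
        _).subperm (by simp; omega) hxyN
  rcases habs.hPow_subset_or_hProd_subset hvu hxu
    (fun z hz ↦ List.eq_of_mem_replicate hz ▸ hyu) (by simp; omega) N hpad with h | h
  · exact .inl ⟨v, hv, h⟩
  · exact .inr ⟨N, by omega, h⟩

end Absorbing

section NotPrime

variable {Q : Set A} {u v : ℕ} {x y : A}

theorem exists_hmul_subset_of_not_isPrimeHyperideal (hQ : IsProperHyperideal Q)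
    (hnp : ¬IsPrimeHyperideal Q) : ∃ x y : A, hmul x y ⊆ Q ∧ x ∉ Q ∧ y ∉ Q := by
  by_contra! h
  exact hnp ⟨hQ, fun x y hxy ↦ or_iff_not_imp_left.2 (h x y hxy)⟩

theorem IsHyperideal.not_isUnitH_of_hmul_subset (hQ : IsHyperideal Q) (hxy : hmul x y ⊆ Q)
    (hy : y ∉ Q) : ¬IsUnitH x :=
  fun hx ↦ hy (hQ.mem_of_isUnitH_of_hmul_subset hx hxy)

theorem IsUVAbsorbingPrime.hProd_cons_subset_or (habs : IsUVAbsorbingPrime Q u v)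
    (hxy : hmul x y ⊆ Q) (hx : x ∉ Q) (hy : y ∉ Q) {m s : List A} (hm : ∀ z ∈ m, ¬IsUnitH z)
    (hs : ∀ z ∈ s, ¬IsUnitH z) (hmv : m.length + 1 = v) (hsu : v + s.length + 1 = u) :
    hProd (x :: m) ⊆ Q ∨ hProd (y :: s) ⊆ Q := by
  have hQ := habs.1.1
  have h : hProd (x :: m ++ y :: s) ⊆ Q :=
    hQ.hProd_subset_of_subperm
      ((List.singleton_sublist.2 (by simp : y ∈ m ++ y :: s)).cons_cons x).subperm
      (List.cons_ne_nil _ _) (by rwa [hProd_pair])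
  have hxu := hQ.not_isUnitH_of_hmul_subset hxy hy
  have hyu := hQ.not_isUnitH_of_hmul_subset (hmul_comm x y ▸ hxy) hx
  have hnu : ∀ z ∈ x :: m ++ y :: s, ¬IsUnitH z := by
    simp only [List.cons_append, List.mem_cons, List.mem_append]
    rintro z (rfl | hz | rfl | hz)
    exacts [hxu, hm z hz, hyu, hs z hz]
  have := habs.2 _ (by simp; omega) hnu h
  rwa [List.take_left' (by simp; omega), List.drop_left' (by simp; omega)] at this

theorem IsUVAbsorbingPrime.not_isUnitH_add (habs : IsUVAbsorbingPrime Q u v) (hv : 1 ≤ v)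
    (hvu : v < u) (hxy : hmul x y ⊆ Q) (hx : x ∉ Q) (hy : y ∉ Q) {a b : A} (ha : ¬IsUnitH a)
    (hb : ¬IsUnitH b) : ¬IsUnitH (a + b) := by
  intro hab
  -- otherwise `z∘(a+b)ᵏ ⊆ Q`, and cancelling the unit `(a+b)ᵏ` gives `z ∈ Q`
  have witness : ∀ (z : A) (k : ℕ), z ∉ Q →
      ∃ m : List A, m.length = k ∧ (∀ w ∈ m, w = a ∨ w = b) ∧ ¬hProd (z :: m) ⊆ Q := by
    intro z k hz
    by_contra! h
    exact hz (habs.1.1.mem_of_hProd_cons_subset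
      (habs.1.1.hProd_append_replicate_add_subset a b k [z] h)
      fun w hw ↦ List.eq_of_mem_replicate hw ▸ hab)
  have hnu : ∀ l : List A, (∀ w ∈ l, w = a ∨ w = b) → ∀ w ∈ l, ¬IsUnitH w := fun l hl w hw ↦ by
    rcases hl w hw with rfl | rfl
    exacts [ha, hb]
  obtain ⟨m, hm, hmab, hmQ⟩ := witness x (v - 1) hx
  obtain ⟨s, hs, hsab, hsQ⟩ := witness y (u - v - 1) hy
  exact (habs.hProd_cons_subset_or hxy hx hy (hnu m hmab) (hnu s hsab) (by omega)
    (by omega)).elim hmQ hsQ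

theorem IsUVAbsorbingPrime.hPow_subset_of_not_isUnitH (habs : IsUVAbsorbingPrime Q (v + 1) v)
    (hv : 1 ≤ v) (hxy : hmul x y ⊆ Q) (hx : x ∉ Q) (hy : y ∉ Q) {a : A} (ha : ¬IsUnitH a) :
    hPow a v ⊆ Q := by
  have hQ := habs.1.1
  obtain ⟨i, rfl⟩ : ∃ i, v = i + 1 := ⟨v - 1, by omega⟩
  have hxa : hProd (x :: List.replicate i a) ⊆ Q :=
    (habs.hProd_cons_subset_or hxy hx hy (s := []) (fun z hz ↦ List.eq_of_mem_replicate hz ▸ ha)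
      (by simp) (by simp) (by simp)).resolve_right fun h ↦ hy (h rfl)
  have hperm : (x :: List.replicate i a).Subperm (List.replicate (i + 1) a ++ [x]) :=
    (List.perm_append_singleton x _).symm.subperm.trans
      (((List.replicate_sublist_replicate a).2 (Nat.le_succ i)).append_right [x]).subperm
  have hnu : ∀ z ∈ List.replicate (i + 1) a ++ [x], ¬IsUnitH z := by
    simp only [List.mem_append, List.mem_replicate, List.mem_singleton]
    rintro z (⟨-, rfl⟩ | rfl)
    exacts [ha, hQ.not_isUnitH_of_hmul_subset hxy hy]
  have := habs.2 _ (by simp) hnu (hQ.hProd_subset_of_subperm hperm (List.cons_ne_nil _ _) hxa)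
  rwa [List.take_left' (by simp), List.drop_left' (by simp),
    or_iff_left fun h ↦ hx (h rfl)] at this

end NotPrime

theorem isMaximalHyperideal_nonunits (h0 : ¬IsUnitH (0 : A))
    (hadd : ∀ a b : A, ¬IsUnitH a → ¬IsUnitH b → ¬IsUnitH (a + b)) :
    IsMaximalHyperideal {a : A | ¬IsUnitH a} := by
  have hN : IsHyperideal {a : A | ¬IsUnitH a} :=
    isHyperideal_of_add_mem ⟨0, h0⟩ (fun a ha b hb ↦ hadd a b ha hb) fun r x hx t ht hu ↦
      hx (isUnitH_of_mem_hmul (hmul_comm r x ▸ ht) hu)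
  refine ⟨⟨hN, fun h ↦ (h ▸ Set.mem_univ (1 : A)) isUnitH_one⟩, fun B hB hNB ↦ ?_⟩
  obtain ⟨b, hbB, hb⟩ := Set.exists_of_ssubset hNB
  exact hB.eq_univ_of_isUnitH_mem hbB (not_not.1 hb)

theorem IsMaximalHyperideal.eq_nonunits {M : Set A} (hM : IsMaximalHyperideal M)
    (hN : IsMaximalHyperideal {a : A | ¬IsUnitH a}) : M = {a : A | ¬IsUnitH a} := by
  by_contra hne
  have hMN : M ⊆ {a : A | ¬IsUnitH a} := fun _ ↦ hM.1.not_isUnitH_of_mem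
  exact hN.1.2 (hM.2 _ hN.1.1 (hMN.ssubset_of_ne hne))

theorem isLocalH_of_isMaximalHyperideal_nonunits
    (hN : IsMaximalHyperideal {a : A | ¬IsUnitH a}) : IsLocalH A :=
  ⟨_, hN, fun _ hM ↦ hM.eq_nonunits hN⟩

/-- for a `(u,v)`-absorbing prime strong `𝒞`-hyperideal `Q`:
(i) `rad(Q)` is prime; (ii) if `Q` is not prime then `A` is local, and if moreover
`u = v+1` then `rad(Q)` equals the unique maximal hyperideal. -/
theorem radH_prime_of_uv_absorbing_prime (Q : Set A) (u v : ℕ) (hv : 1 ≤ v) (hvu : v < u)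
    (habs : IsUVAbsorbingPrime Q u v) (hstrong : IsStrongCHyperideal Q) :
    IsPrimeHyperideal (radH Q) ∧
      (¬IsPrimeHyperideal Q →
        IsLocalH A ∧ (u = v + 1 → ∀ M : Set A, IsMaximalHyperideal M → radH Q = M)) := by
  have hprime := habs.isPrimeHyperideal_powRadH hstrong.isCHyperideal hv hvu
  rw [radH_eq_powRadH hprime]
  refine ⟨hprime, fun hnp ↦ ?_⟩
  obtain ⟨x, y, hxy, hx, hy⟩ := exists_hmul_subset_of_not_isPrimeHyperideal habs.1 hnp
  have hN : IsMaximalHyperideal {a : A | ¬IsUnitH a} :=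
    isMaximalHyperideal_nonunits (habs.1.not_isUnitH_of_mem habs.1.1.zero_mem)
      fun _ _ ↦ habs.not_isUnitH_add hv hvu hxy hx hy
  refine ⟨isLocalH_of_isMaximalHyperideal_nonunits hN, fun hu M hM ↦ ?_⟩
  subst hu
  rw [hM.eq_nonunits hN]
  exact habs.1.powRadH_subset_nonunits.antisymm fun a ha ↦
    ⟨v, hv, habs.hPow_subset_of_not_isUnitH hv hxy hx hy ha⟩
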